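/- The three-valued matrix 𝔗' validates strictly fewer formulas than classical logic: every 𝔗'-{2}-tautology is a classical tautology (via the projection mapping 0 ↦ false, 1 and 2 appropriately), but there exists a classical tautology that is not a 𝔗'-{2}-tautology. -/
import Mathlib


/-- Propositional formulas over ¬ and →. -/
inductive Fm where
  | var : Nat → Fm
  | neg : Fm → Fm
  | imp : Fm → Fm → Fm
deriving DecidableEq

open Fm

/-- Classical two-valued evaluation (→ is material implication). -/
def evalB (v : Nat → Bool) : Fm → Bool
  | var n => v n
  | neg φ => ! evalB v φ
  | imp φ ψ => !(evalB v φ) || evalB v ψ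

/-- Negation of the three-valued matrix 𝔗'. -/
def gneg : Fin 3 → Fin 3 := ![1, 2, 1]

/-- Implication of the three-valued matrix 𝔗'. -/
def gimp : Fin 3 → Fin 3 → Fin 3 := ![![2, 1, 2], ![2, 2, 2], ![0, 1, 2]]

/-- Evaluation in the three-valued matrix 𝔗'. -/
def eval3 (v : Nat → Fin 3) : Fm → Fin 3
  | var n => v n
  | neg φ => gneg (eval3 v φ)
  | imp φ ψ => gimp (eval3 v φ) (eval3 v ψ)

/-- Uniform substitution of formulas for variables. -/
def subst (s : Nat → Fm) : Fm → Fm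
  | var n => s n
  | neg φ => neg (subst s φ)
  | imp φ ψ => imp (subst s φ) (subst s ψ)

/-- Provability in the Hilbert system H_X: axiom schemas X1–X4,
    closed under modus ponens and uniform substitution. -/
inductive Prov : Fm → Prop where
  | x1 : Prov (imp (var 0) (imp (var 1) (var 0)))
  | x2 : Prov (imp (imp (var 0) (imp (var 1) (var 2)))
           (imp (imp (var 0) (var 1)) (imp (var 0) (var 2))))
  | x3 : Prov (imp (neg (var 0)) (imp (var 0) (var 1)))
  | x4 : Prov (imp (imp (var 0) (neg (var 0))) (neg (var 0)))
  | mp {φ ψ : Fm} : Prov (imp φ ψ) → Prov φ → Prov ψ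
  | sub {φ : Fm} (s : Nat → Fm) : Prov φ → Prov (subst s φ)

/-- Peirce's law ((p → q) → p) → p. -/
def peirceFm : Fm := imp (imp (imp (var 0) (var 1)) (var 0)) (var 0)


def hmap : Fin 3 → Bool := ![true, false, true]

def liftv (v : Nat → Bool) (n : Nat) : Fin 3 := if v n then 2 else 1

lemma hom_eval (v : Nat → Bool) : ∀ φ, evalB v φ = hmap (eval3 (liftv v) φ) := by
  intro φ
  induction φ with
  | var n => simp [evalB, eval3, liftv, hmap]; by_cases h : v n <;> simp [h]
  | neg φ ih =>
      simp only [evalB, eval3, ih]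
      generalize eval3 (liftv v) φ = x
      fin_cases x <;> decide
  | imp φ ψ ih1 ih2 =>
      simp only [evalB, eval3, ih1, ih2]
      generalize eval3 (liftv v) φ = x
      generalize eval3 (liftv v) ψ = y
      fin_cases x <;> fin_cases y <;> decide

theorem three_valued_strictly_weaker :
    (∀ φ : Fm, (∀ v : Nat → Fin 3, eval3 v φ = 2) →
      ∀ v : Nat → Bool, evalB v φ = true) ∧
    (∃ φ : Fm, (∀ v : Nat → Bool, evalB v φ = true) ∧
      ∃ v : Nat → Fin 3, eval3 v φ ≠ 2) := by
  constructor
  · intro φ h v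
    rw [hom_eval v φ, h (liftv v)]
    rfl
  · refine ⟨peirceFm, ?_, fun n => if n = 0 then 0 else 1, ?_⟩
    · intro v
      simp [peirceFm, evalB]
      cases h : v 0 <;> simp
    · decide
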